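/- If all demand and supply patience distributions have nondecreasing hazard rates on their supports, then the matching problem admits an optimal extreme point solution: there exists a point m* belonging to the set of extreme points of the compact convex polytope 𝕄(λ,μ) such that Φ(m*) ≥ Φ(m) for every m ∈ 𝕄(λ,μ), where Φ(m) = Σ_{j,k} v_{jk} m_{jk} − Σ_j c_j^D q*_j(m) − Σ_k c_k^S i*_k(m). -/

import Mathlib

open MeasureTheory

/-- A patience time distribution: a cdf `G` on `[0,∞)` with `G 0 = 0`, density `g`,
finite mean `1/θ`, strictly increasing from its support onto `[0,1)`. -/
structure PatienceDist where
  G : ℝ → ℝ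
  g : ℝ → ℝ
  θ : ℝ
  theta_pos : 0 < θ
  G_zero : G 0 = 0
  mono : Monotone G
  nonneg : ∀ x, 0 ≤ G x
  le_one : ∀ x, G x ≤ 1
  g_nonneg : ∀ x, 0 ≤ g x
  density : ∀ x, 0 ≤ x → G x = ∫ u in (0:ℝ)..x, g u
  mean : (∫ u in Set.Ioi (0:ℝ), (1 - G u)) = 1 / θ
  strictMono_support : ∀ ⦃x y : ℝ⦄, 0 ≤ x → x < y → G y < 1 → G x < G y
  surj_support : ∀ y, 0 ≤ y → y < 1 → ∃ x, 0 ≤ x ∧ G x = y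

namespace PatienceDist

/-- The inverse of the cdf from `[0,1)` onto the support. -/
noncomputable def inv (P : PatienceDist) (y : ℝ) : ℝ :=
  sInf {x | 0 ≤ x ∧ P.G x = y}

/-- The excess life distribution `G_e(x) = θ ∫₀ˣ (1 - G u) du`. -/
noncomputable def Ge (P : PatienceDist) (x : ℝ) : ℝ :=
  P.θ * ∫ u in (0:ℝ)..x, (1 - P.G u)

/-- The hazard rate `h(x) = g(x) / (1 - G(x))`. -/
noncomputable def hazard (P : PatienceDist) (x : ℝ) : ℝ :=
  P.g x / (1 - P.G x)

/-- The hazard rate is nondecreasing on the support. -/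
def HazardNondec (P : PatienceDist) : Prop :=
  ∀ ⦃x y : ℝ⦄, 0 ≤ x → x ≤ y → P.G y < 1 → P.hazard x ≤ P.hazard y

/-- The hazard rate is strictly increasing on the support. -/
def HazardStrictInc (P : PatienceDist) : Prop :=
  ∀ ⦃x y : ℝ⦄, 0 ≤ x → x < y → P.G y < 1 → P.hazard x < P.hazard y

/-- The hazard rate is nonincreasing on the support. -/
def HazardNoninc (P : PatienceDist) : Prop :=
  ∀ ⦃x y : ℝ⦄, 0 ≤ x → x ≤ y → P.G y < 1 → P.hazard y ≤ P.hazard x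

/-- The hazard rate is strictly decreasing on the support. -/
def HazardStrictDec (P : PatienceDist) : Prop :=
  ∀ ⦃x y : ℝ⦄, 0 ≤ x → x < y → P.G y < 1 → P.hazard y < P.hazard x

end PatienceDist

section AuxLemmas
open Set

namespace PatienceDist
variable (P : PatienceDist)

lemma G_pos {x : ℝ} (hx : 0 < x) : 0 < P.G x := by
  rcases lt_or_ge (P.G x) 1 with h | h
  · have := P.strictMono_support le_rfl hx h
    rwa [P.G_zero] at this
  · linarith

lemma g_intervalIntegrable {b : ℝ} (hb : 0 ≤ b) :
    IntervalIntegrable P.g volume 0 b := by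
  rcases eq_or_lt_of_le hb with rfl | hb
  · exact IntervalIntegrable.refl
  · by_contra h
    have := P.density b hb.le
    rw [intervalIntegral.integral_undef h] at this
    exact absurd this.symm (ne_of_gt (P.G_pos hb)).symm

lemma g_intervalIntegrable' {a b : ℝ} (ha : 0 ≤ a) (hab : a ≤ b) :
    IntervalIntegrable P.g volume a b := by
  refine (P.g_intervalIntegrable (ha.trans hab)).mono_set ?_
  rw [uIcc_of_le hab, uIcc_of_le (ha.trans hab)]
  exact Icc_subset_Icc ha le_rfl

lemma G_sub_eq {a b : ℝ} (ha : 0 ≤ a) (hab : a ≤ b) :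
    P.G b - P.G a = ∫ u in Set.Ioc a b, P.g u := by
  have h1 := P.g_intervalIntegrable ha
  have h2 := P.g_intervalIntegrable' ha hab
  have := intervalIntegral.integral_add_adjacent_intervals h1 h2
  rw [P.density a ha, P.density b (ha.trans hab), ← this,
    intervalIntegral.integral_of_le hab]
  ring

lemma oneSubG_integrableOn_Ioi :
    IntegrableOn (fun u => 1 - P.G u) (Set.Ioi (0:ℝ)) := by
  by_contra h
  have := P.mean
  rw [MeasureTheory.integral_undef h] at this
  have h2 : (0:ℝ) < 1 / P.θ := by
    have := P.theta_pos; positivity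
  rw [← this] at h2
  exact lt_irrefl _ h2

lemma oneSubG_integrableOn {s : Set ℝ} (hs : s ⊆ Set.Ioi (0:ℝ)) :
    IntegrableOn (fun u => 1 - P.G u) s := (P.oneSubG_integrableOn_Ioi).mono_set hs

lemma Ge_eq {x : ℝ} (hx : 0 ≤ x) :
    P.Ge x = P.θ * ∫ u in Set.Ioc 0 x, (1 - P.G u) := by
  rw [Ge, intervalIntegral.integral_of_le hx]

/-- splitting of integral of 1 - G -/
lemma I_split {a b : ℝ} (ha : 0 ≤ a) (hab : a ≤ b) :
    ∫ u in Set.Ioc 0 b, (1 - P.G u)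
      = (∫ u in Set.Ioc 0 a, (1 - P.G u)) + ∫ u in Set.Ioc a b, (1 - P.G u) := by
  rw [← Set.Ioc_union_Ioc_eq_Ioc ha hab,
    MeasureTheory.setIntegral_union (Set.Ioc_disjoint_Ioc_of_le le_rfl) measurableSet_Ioc
      (P.oneSubG_integrableOn (Set.Ioc_subset_Ioi_self))
      (P.oneSubG_integrableOn (fun u hu => lt_of_le_of_lt ha hu.1))]

lemma mean_split {a : ℝ} (ha : 0 ≤ a) :
    1 / P.θ = (∫ u in Set.Ioc 0 a, (1 - P.G u)) + ∫ u in Set.Ioi a, (1 - P.G u) := by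
  rw [← P.mean, ← Set.Ioc_union_Ioi_eq_Ioi ha,
    MeasureTheory.setIntegral_union (Set.Ioc_disjoint_Ioi le_rfl) measurableSet_Ioi
      (P.oneSubG_integrableOn (Set.Ioc_subset_Ioi_self))
      (P.oneSubG_integrableOn (fun u hu => lt_of_le_of_lt ha hu))]

lemma inv_spec {t : ℝ} (ht0 : 0 ≤ t) (ht1 : t < 1) :
    0 ≤ P.inv t ∧ P.G (P.inv t) = t := by
  obtain ⟨x0, hx0, hGx0⟩ := P.surj_support t ht0 ht1
  have hne : {x | 0 ≤ x ∧ P.G x = t}.Nonempty := ⟨x0, hx0, hGx0⟩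
  have hbdd : BddBelow {x | 0 ≤ x ∧ P.G x = t} := ⟨0, fun x hx => hx.1⟩
  have hinv0 : 0 ≤ P.inv t := le_csInf hne (fun x hx => hx.1)
  refine ⟨hinv0, ?_⟩
  have hle : P.G (P.inv t) ≤ t := by
    have := csInf_le hbdd (show x0 ∈ _ from ⟨hx0, hGx0⟩)
    calc P.G (P.inv t) ≤ P.G x0 := P.mono this
    _ = t := hGx0
  rcases eq_or_lt_of_le hle with h | h
  · exact h
  · exfalso
    obtain ⟨y, hy0, hGy⟩ := P.surj_support ((P.G (P.inv t) + t) / 2)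
      (by have := P.nonneg (P.inv t); linarith) (by linarith)
    have hylb : ∀ x ∈ {x | 0 ≤ x ∧ P.G x = t}, y ≤ x := by
      intro x hx
      by_contra hyx
      push_neg at hyx
      have := P.mono hyx.le
      rw [hGy, hx.2] at this
      linarith
    have h1 : y ≤ P.inv t := le_csInf hne hylb
    have h2 : P.G y ≤ P.G (P.inv t) := P.mono h1
    rw [hGy] at h2
    linarith

lemma inv_nonneg {t : ℝ} (ht0 : 0 ≤ t) (ht1 : t < 1) : 0 ≤ P.inv t :=
  (P.inv_spec ht0 ht1).1

lemma G_inv {t : ℝ} (ht0 : 0 ≤ t) (ht1 : t < 1) : P.G (P.inv t) = t :=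
  (P.inv_spec ht0 ht1).2

lemma inv_lt_inv {t t' : ℝ} (ht0 : 0 ≤ t) (htt' : t < t') (ht1 : t' < 1) :
    P.inv t < P.inv t' := by
  by_contra h
  push_neg at h
  have := P.mono h
  rw [P.G_inv ht0 (htt'.trans ht1), P.G_inv (ht0.trans htt'.le) ht1] at this
  linarith

end PatienceDist


namespace PatienceDist
variable (P : PatienceDist)

lemma oneSubG_nonneg (u : ℝ) : 0 ≤ 1 - P.G u := by linarith [P.le_one u]

lemma I_nonneg (s : Set ℝ) : 0 ≤ ∫ u in s, (1 - P.G u) :=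
  setIntegral_nonneg_of_ae_restrict (Filter.Eventually.of_forall fun u => P.oneSubG_nonneg u)

lemma integral_g_le (hP : P.HazardNondec) {a b : ℝ} (ha : 0 ≤ a) (hab : a ≤ b)
    (hGb : P.G b < 1) :
    P.G b - P.G a ≤ P.hazard b * ∫ u in Set.Ioc a b, (1 - P.G u) := by
  rw [P.G_sub_eq ha hab, ← MeasureTheory.integral_const_mul]
  refine setIntegral_mono_on ((P.g_intervalIntegrable' ha hab).1) ?_ measurableSet_Ioc ?_
  · exact ((P.oneSubG_integrableOn (fun u hu => lt_of_le_of_lt ha hu.1)).const_mul _)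
  · intro u hu
    have hu0 : 0 ≤ u := ha.trans hu.1.le
    have hGu : P.G u < 1 := lt_of_le_of_lt (le_of_le_of_eq (P.mono hu.2) rfl) hGb
    have hgu : P.g u = P.hazard u * (1 - P.G u) := by
      rw [hazard, div_mul_cancel₀]
      exact sub_ne_zero.2 (ne_of_lt hGu).symm
    rw [hgu]
    exact mul_le_mul_of_nonneg_right (hP hu0 hu.2 hGb) (by linarith)

lemma le_integral_g (hP : P.HazardNondec) {a b : ℝ} (ha : 0 ≤ a) (hab : a ≤ b) :
    P.hazard a * (∫ u in Set.Ioc a b, (1 - P.G u)) ≤ P.G b - P.G a := by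
  rw [P.G_sub_eq ha hab, ← MeasureTheory.integral_const_mul]
  refine setIntegral_mono_on ?_ ((P.g_intervalIntegrable' ha hab).1) measurableSet_Ioc ?_
  · exact ((P.oneSubG_integrableOn (fun u hu => lt_of_le_of_lt ha hu.1)).const_mul _)
  · intro u hu
    have hu0 : 0 ≤ u := ha.trans hu.1.le
    rcases lt_or_eq_of_le (P.le_one u) with hGu | hGu
    · have hgu : P.g u = P.hazard u * (1 - P.G u) := by
        rw [hazard, div_mul_cancel₀]
        exact sub_ne_zero.2 (ne_of_lt hGu).symm
      rw [hgu]
      exact mul_le_mul_of_nonneg_right (hP ha hu.1.le hGu) (by linarith)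
    · rw [← hGu]
      simp [P.g_nonneg u]

lemma hazard_mul_tail_le (hP : P.HazardNondec) {a : ℝ} (ha : 0 ≤ a) :
    P.hazard a * (∫ u in Set.Ioi a, (1 - P.G u)) ≤ 1 - P.G a := by
  have hunion : (⋃ n : ℕ, Set.Ioc a (a + n)) = Set.Ioi a := by
    ext x
    simp only [Set.mem_iUnion, Set.mem_Ioc, Set.mem_Ioi]
    constructor
    · rintro ⟨n, h1, _⟩; exact h1
    · intro hx
      obtain ⟨n, hn⟩ := exists_nat_ge (x - a)
      exact ⟨n, hx, by linarith⟩
  have hmono : Monotone (fun n : ℕ => Set.Ioc a (a + (n:ℝ))) := by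
    intro m n hmn
    exact Set.Ioc_subset_Ioc_right (by exact_mod_cast add_le_add_right (Nat.cast_le.2 hmn) a)
  have hint : IntegrableOn (fun u => 1 - P.G u) (⋃ n : ℕ, Set.Ioc a (a + (n:ℝ))) := by
    rw [hunion]
    exact P.oneSubG_integrableOn (Set.Ioi_subset_Ioi ha)
  have htend := tendsto_setIntegral_of_monotone (fun n : ℕ => measurableSet_Ioc) hmono hint
  rw [hunion] at htend
  refine le_of_tendsto (htend.const_mul (P.hazard a)) (Filter.Eventually.of_forall fun n => ?_)
  calc P.hazard a * ∫ u in Set.Ioc a (a + (n:ℝ)), (1 - P.G u)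
      ≤ P.G (a + n) - P.G a := P.le_integral_g hP ha (le_add_of_nonneg_right (Nat.cast_nonneg n))
    _ ≤ 1 - P.G a := by linarith [P.le_one (a + (n:ℝ))]

noncomputable def psi (P : PatienceDist) (t : ℝ) : ℝ :=
  if t = 1 then 1 else P.Ge (P.inv t)

lemma psi_eq {t : ℝ} (ht0 : 0 ≤ t) (ht1 : t < 1) :
    P.psi t = P.θ * ∫ u in Set.Ioc 0 (P.inv t), (1 - P.G u) := by
  rw [psi, if_neg (ne_of_lt ht1), P.Ge_eq (P.inv_nonneg ht0 ht1)]

lemma psi_one : P.psi 1 = 1 := by rw [psi, if_pos rfl]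

lemma psi_le_one {t : ℝ} (ht0 : 0 ≤ t) (ht1 : t ≤ 1) : P.psi t ≤ 1 := by
  rcases eq_or_lt_of_le ht1 with rfl | ht1
  · rw [psi_one]
  · rw [P.psi_eq ht0 ht1]
    have hsplit := P.mean_split (P.inv_nonneg ht0 ht1)
    have htail := P.I_nonneg (Set.Ioi (P.inv t))
    have hθ := P.theta_pos
    have : ∫ u in Set.Ioc 0 (P.inv t), (1 - P.G u) ≤ 1 / P.θ := by linarith
    calc P.θ * ∫ u in Set.Ioc 0 (P.inv t), (1 - P.G u) ≤ P.θ * (1 / P.θ) :=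
          mul_le_mul_of_nonneg_left this hθ.le
      _ = 1 := by field_simp

lemma one_sub_psi {t : ℝ} (ht0 : 0 ≤ t) (ht1 : t < 1) :
    1 - P.psi t = P.θ * ∫ u in Set.Ioi (P.inv t), (1 - P.G u) := by
  rw [P.psi_eq ht0 ht1]
  have hsplit := P.mean_split (P.inv_nonneg ht0 ht1)
  have hθ : P.θ ≠ 0 := ne_of_gt P.theta_pos
  have h1 : P.θ * (1 / P.θ) = 1 := by field_simp
  have h2 := congrArg (fun z => P.θ * z) hsplit
  simp only [mul_add] at h2
  linarith

lemma psi_mono {t t' : ℝ} (ht0 : 0 ≤ t) (htt' : t ≤ t') (ht1 : t' ≤ 1) :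
    P.psi t ≤ P.psi t' := by
  rcases eq_or_lt_of_le ht1 with rfl | ht1'
  · exact (P.psi_le_one ht0 htt').trans_eq P.psi_one.symm
  · rcases eq_or_lt_of_le htt' with rfl | htt'
    · exact le_refl _
    · have hx := P.inv_lt_inv ht0 htt' ht1'
      rw [P.psi_eq ht0 (htt'.trans ht1'), P.psi_eq (ht0.trans htt'.le) ht1',
        P.I_split (P.inv_nonneg ht0 (htt'.trans ht1')) hx.le]
      have := P.I_nonneg (Set.Ioc (P.inv t) (P.inv t'))
      nlinarith [P.theta_pos]

theorem psi_concave (hP : P.HazardNondec) : ConcaveOn ℝ (Set.Icc 0 1) P.psi := by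
  refine concaveOn_of_slope_anti_adjacent (convex_Icc 0 1) ?_
  intro t1 t2 t3 h1 h3 h12 h23
  have ht10 : (0:ℝ) ≤ t1 := h1.1
  have ht31 : t3 ≤ 1 := h3.2
  have ht21 : t2 < 1 := lt_of_lt_of_le h23 ht31
  have ht20 : 0 ≤ t2 := ht10.trans h12.le
  have hx12 : P.inv t1 < P.inv t2 := P.inv_lt_inv ht10 h12 ht21
  have hx10 : 0 ≤ P.inv t1 := P.inv_nonneg ht10 (h12.trans ht21)
  have hx20 : 0 ≤ P.inv t2 := P.inv_nonneg ht20 ht21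
  have hGx2 : P.G (P.inv t2) = t2 := P.G_inv ht20 ht21
  have hGx1 : P.G (P.inv t1) = t1 := P.G_inv ht10 (h12.trans ht21)
  set I12 := ∫ u in Set.Ioc (P.inv t1) (P.inv t2), (1 - P.G u) with hI12def
  have hL1 : t2 - t1 ≤ P.hazard (P.inv t2) * I12 := by
    have := P.integral_g_le hP hx10 hx12.le (by rw [hGx2]; exact ht21)
    rwa [hGx2, hGx1] at this
  have hI12nn : 0 ≤ I12 := P.I_nonneg _
  have hh2 : 0 < P.hazard (P.inv t2) := by
    by_contra h
    push_neg at h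
    nlinarith
  have hI12pos : 0 < I12 := by nlinarith
  have hslope1 : P.psi t2 - P.psi t1 = P.θ * I12 := by
    rw [P.psi_eq ht20 ht21, P.psi_eq ht10 (h12.trans ht21),
      P.I_split hx10 hx12.le]
    ring
  have hθ := P.theta_pos
  have hlower : P.θ / P.hazard (P.inv t2) ≤ (P.psi t2 - P.psi t1) / (t2 - t1) := by
    rw [hslope1, div_le_div_iff₀ hh2 (by linarith : (0:ℝ) < t2 - t1)]
    nlinarith
  have hupper : (P.psi t3 - P.psi t2) / (t3 - t2) ≤ P.θ / P.hazard (P.inv t2) := by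
    rcases eq_or_lt_of_le ht31 with rfl | ht31'
    · have htail := P.hazard_mul_tail_le hP hx20
      rw [hGx2] at htail
      rw [P.psi_one, P.one_sub_psi ht20 ht21,
        div_le_div_iff₀ (by linarith : (0:ℝ) < 1 - t2) hh2]
      nlinarith [P.I_nonneg (Set.Ioi (P.inv t2))]
    · have ht30 : 0 ≤ t3 := ht20.trans h23.le
      have hx23 : P.inv t2 < P.inv t3 := P.inv_lt_inv ht20 h23 ht31'
      have hGx3 : P.G (P.inv t3) = t3 := P.G_inv ht30 ht31'
      set I23 := ∫ u in Set.Ioc (P.inv t2) (P.inv t3), (1 - P.G u) with hI23def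
      have hL2 : P.hazard (P.inv t2) * I23 ≤ t3 - t2 := by
        have := P.le_integral_g hP hx20 hx23.le
        rwa [hGx3, hGx2] at this
      have hslope2 : P.psi t3 - P.psi t2 = P.θ * I23 := by
        rw [P.psi_eq ht30 ht31', P.psi_eq ht20 ht21, P.I_split hx20 hx23.le]
        ring
      rw [hslope2, div_le_div_iff₀ (by linarith : (0:ℝ) < t3 - t2) hh2]
      nlinarith [P.I_nonneg (Set.Ioc (P.inv t2) (P.inv t3))]
  linarith

end PatienceDist

namespace PatienceDist
variable (P : PatienceDist)

lemma I_le {a b c : ℝ} (ha : 0 ≤ a) (hab : a ≤ b)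
    (hc : ∀ u ∈ Set.Ioc a b, 1 - P.G u ≤ c) :
    ∫ u in Set.Ioc a b, (1 - P.G u) ≤ (b - a) * c := by
  have h1 : ∫ u in Set.Ioc a b, (1 - P.G u) ≤ ∫ _u in Set.Ioc a b, c :=
    setIntegral_mono_on (P.oneSubG_integrableOn (fun u hu => lt_of_le_of_lt ha hu.1))
      (integrableOn_const (by rw [Real.volume_Ioc]; exact ENNReal.ofReal_ne_top))
      measurableSet_Ioc hc
  rw [MeasureTheory.setIntegral_const, Real.volume_real_Ioc_of_le hab,
    smul_eq_mul] at h1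
  exact h1

lemma tail_split {a b : ℝ} (ha : 0 ≤ a) (hab : a ≤ b) :
    ∫ u in Set.Ioi a, (1 - P.G u)
      = (∫ u in Set.Ioc a b, (1 - P.G u)) + ∫ u in Set.Ioi b, (1 - P.G u) := by
  rw [← Set.Ioc_union_Ioi_eq_Ioi hab,
    MeasureTheory.setIntegral_union (Set.Ioc_disjoint_Ioi le_rfl) measurableSet_Ioi
      (P.oneSubG_integrableOn (fun u hu => lt_of_le_of_lt ha hu.1))
      (P.oneSubG_integrableOn (fun u hu => lt_of_le_of_lt (ha.trans hab) hu))]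

lemma tail_small {ε : ℝ} (hε : 0 < ε) :
    ∃ R : ℝ, 0 < R ∧ P.θ * ∫ u in Set.Ioi R, (1 - P.G u) < ε := by
  have hθ := P.theta_pos
  have hunion : (⋃ n : ℕ, Set.Ioc (0:ℝ) n) = Set.Ioi (0:ℝ) := by
    ext x
    simp only [Set.mem_iUnion, Set.mem_Ioc, Set.mem_Ioi]
    constructor
    · rintro ⟨n, h1, _⟩; exact h1
    · intro hx
      obtain ⟨n, hn⟩ := exists_nat_ge x
      exact ⟨n, hx, hn⟩
  have hmono : Monotone (fun n : ℕ => Set.Ioc (0:ℝ) n) := by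
    intro m n hmn
    exact Set.Ioc_subset_Ioc_right (Nat.cast_le.2 hmn)
  have hint : IntegrableOn (fun u => 1 - P.G u) (⋃ n : ℕ, Set.Ioc (0:ℝ) (n:ℝ)) := by
    rw [hunion]; exact P.oneSubG_integrableOn_Ioi
  have htend := tendsto_setIntegral_of_monotone (fun n : ℕ => measurableSet_Ioc) hmono hint
  rw [hunion, P.mean] at htend
  have hev : ∀ᶠ n : ℕ in Filter.atTop,
      dist (∫ u in Set.Ioc (0:ℝ) (n:ℝ), (1 - P.G u)) (1 / P.θ) < ε / P.θ :=
    Metric.tendsto_nhds.1 htend _ (by positivity)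
  obtain ⟨n, hn1, hn2⟩ := (hev.and (Filter.eventually_ge_atTop 1)).exists
  refine ⟨(n:ℝ), by exact_mod_cast hn2, ?_⟩
  have hsplit := P.mean_split (show (0:ℝ) ≤ (n:ℝ) by positivity)
  rw [Real.dist_eq, abs_lt] at hn1
  have : ∫ u in Set.Ioi (n:ℝ), (1 - P.G u) < ε / P.θ := by linarith
  calc P.θ * ∫ u in Set.Ioi (n:ℝ), (1 - P.G u) < P.θ * (ε / P.θ) :=
        (mul_lt_mul_iff_right₀ hθ).2 this
    _ = ε := by field_simp

theorem psi_continuousOn : ContinuousOn P.psi (Set.Icc 0 1) := by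
  have hθ := P.theta_pos
  rw [Metric.continuousOn_iff]
  intro t₀ ht₀ ε hε
  rcases eq_or_lt_of_le ht₀.2 with rfl | ht₀1
  · -- t₀ = 1
    obtain ⟨R, hR, htail⟩ := P.tail_small (show 0 < ε/2 by linarith)
    refine ⟨min (ε / (2 * P.θ * R)) 1, lt_min (by positivity) one_pos, ?_⟩
    intro t ht hdist
    rcases eq_or_lt_of_le ht.2 with rfl | ht1
    · simpa using hε
    · rw [Real.dist_eq, P.psi_one, abs_sub_comm, abs_of_nonneg (by
        linarith [P.psi_le_one ht.1 ht.2])]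
      rw [P.one_sub_psi ht.1 ht1]
      set x := P.inv t with hx
      have hx0 : 0 ≤ x := P.inv_nonneg ht.1 ht1
      have hGx : P.G x = t := P.G_inv ht.1 ht1
      rcases le_or_gt R x with hRx | hxR
      · have hmono : ∫ u in Set.Ioi x, (1 - P.G u) ≤ ∫ u in Set.Ioi R, (1 - P.G u) :=
          setIntegral_mono_set (P.oneSubG_integrableOn (fun u hu => lt_trans hR hu))
            (Filter.Eventually.of_forall fun u => P.oneSubG_nonneg u)
            (HasSubset.Subset.eventuallyLE (Set.Ioi_subset_Ioi hRx))
        calc P.θ * ∫ u in Set.Ioi x, (1 - P.G u)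
            ≤ P.θ * ∫ u in Set.Ioi R, (1 - P.G u) := (mul_le_mul_iff_right₀ hθ).2 hmono
          _ < ε/2 := htail
          _ < ε := by linarith
      · have hsplit := P.tail_split hx0 hxR.le
        have hIle : ∫ u in Set.Ioc x R, (1 - P.G u) ≤ (R - x) * (1 - t) := by
          refine P.I_le hx0 hxR.le fun u hu => ?_
          have := P.mono hu.1.le
          rw [hGx] at this
          linarith
        have h1t : 1 - t < min (ε / (2 * P.θ * R)) 1 := by
          rw [Real.dist_eq, abs_lt] at hdist
          linarith [hdist.1]
        have h1t' : 1 - t < ε / (2 * P.θ * R) := lt_of_lt_of_le h1t (min_le_left _ _)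
        have h1t0 : 0 ≤ 1 - t := by linarith
        have hRx' : (R - x) * (1 - t) ≤ R * (1 - t) :=
          mul_le_mul_of_nonneg_right (by linarith) h1t0
        have key : P.θ * ((R - x) * (1 - t)) < ε / 2 := by
          have hlt : R * (1 - t) < R * (ε / (2 * P.θ * R)) :=
            (mul_lt_mul_iff_right₀ hR).2 h1t'
          have heq : R * (ε / (2 * P.θ * R)) = ε / (2 * P.θ) := by
            field_simp
          have k1 := mul_le_mul_of_nonneg_left hRx' hθ.le
          have k2 := (mul_lt_mul_iff_right₀ hθ).2 (lt_of_lt_of_le hlt heq.le)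
          have k3 : P.θ * (ε / (2 * P.θ)) = ε / 2 := by field_simp
          linarith
        have hmul := mul_le_mul_of_nonneg_left hIle hθ.le
        have hmul2 := mul_le_mul_of_nonneg_left hRx' hθ.le
        rw [hsplit, mul_add]
        linarith
  · -- t₀ < 1
    have ht₀0 : 0 ≤ t₀ := ht₀.1
    set x₀ := P.inv t₀ with hx₀def
    have hx₀0 : 0 ≤ x₀ := P.inv_nonneg ht₀0 ht₀1
    have hGx₀ : P.G x₀ = t₀ := P.G_inv ht₀0 ht₀1
    -- right modulus
    set b := x₀ + ε / (2 * P.θ) with hbdef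
    have hx₀b : x₀ < b := by
      have : 0 < ε / (2 * P.θ) := by positivity
      rw [hbdef]; linarith
    obtain ⟨δr, hδr, Hr⟩ : ∃ δr > 0, ∀ t, t₀ ≤ t → t < t₀ + δr → t < 1 →
        P.psi t - P.psi t₀ < ε := by
      have main : ∀ t, t₀ ≤ t → t < 1 → P.inv t < b → P.psi t - P.psi t₀ < ε := by
        intro t htt₀ ht1 hxtb
        set xt := P.inv t with hxt
        have hxt0 : 0 ≤ xt := P.inv_nonneg (ht₀0.trans htt₀) ht1
        rcases le_or_gt xt x₀ with hle | hlt
        · rw [P.psi_eq (ht₀0.trans htt₀) ht1, P.psi_eq ht₀0 ht₀1, P.I_split hxt0 hle]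
          simp only [← hx₀def, ← hxt, mul_add]
          have h1 := P.I_nonneg (Set.Ioc xt x₀)
          have h2 := mul_le_mul_of_nonneg_left h1 hθ.le
          rw [mul_zero] at h2
          linarith
        · rw [P.psi_eq (ht₀0.trans htt₀) ht1, P.psi_eq ht₀0 ht₀1, P.I_split hx₀0 hlt.le]
          simp only [← hx₀def, ← hxt, mul_add]
          have hIle : ∫ u in Set.Ioc x₀ xt, (1 - P.G u) ≤ (xt - x₀) * 1 :=
            P.I_le hx₀0 hlt.le fun u hu => by linarith [P.nonneg u]
          rw [mul_one] at hIle
          have hxtb' : xt - x₀ < ε / (2 * P.θ) := by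
            rw [hbdef] at hxtb; linarith
          have h1 := mul_le_mul_of_nonneg_left hIle hθ.le
          have h2 := (mul_lt_mul_iff_right₀ hθ).2 hxtb'
          have h3 : P.θ * (ε / (2 * P.θ)) = ε / 2 := by field_simp
          linarith
      by_cases hGb : P.G b < 1
      · refine ⟨P.G b - t₀, by
          have := P.strictMono_support hx₀0 hx₀b hGb
          rw [hGx₀] at this; linarith, ?_⟩
        intro t htt₀ htub ht1
        refine main t htt₀ ht1 ?_
        by_contra hc
        push_neg at hc
        have := P.mono hc
        rw [P.G_inv (ht₀0.trans htt₀) ht1] at this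
        linarith
      · refine ⟨1 - t₀, by linarith, ?_⟩
        intro t htt₀ htub ht1
        refine main t htt₀ ht1 ?_
        have hGb1 : P.G b = 1 := le_antisymm (P.le_one b) (not_lt.1 hGb)
        by_contra hc
        push_neg at hc
        have := P.mono hc
        rw [P.G_inv (ht₀0.trans htt₀) ht1, hGb1] at this
        linarith
    -- left modulus
    obtain ⟨δl, hδl, Hl⟩ : ∃ δl > 0, ∀ t, 0 ≤ t → t₀ - δl < t → t ≤ t₀ →
        P.psi t₀ - P.psi t < ε := by
      rcases eq_or_lt_of_le ht₀0 with h0 | ht₀pos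
      · refine ⟨1, one_pos, ?_⟩
        intro t ht0 _ htt₀
        have : t = t₀ := le_antisymm htt₀ (h0 ▸ ht0)
        rw [this]; simpa using hε
      · have hx₀pos : 0 < x₀ := by
          rcases eq_or_lt_of_le hx₀0 with h | h
          · exfalso
            rw [← h, P.G_zero] at hGx₀
            linarith
          · exact h
        set c := max (x₀ - ε / (2 * P.θ)) 0 with hcdef
        have hc0 : 0 ≤ c := le_max_right _ _
        have hcx₀ : c < x₀ := by
          apply max_lt _ hx₀pos
          have : 0 < ε / (2 * P.θ) := by positivity
          linarith
        have hGc : P.G c < t₀ := by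
          have := P.strictMono_support hc0 hcx₀ (by rw [hGx₀]; exact ht₀1)
          rwa [hGx₀] at this
        refine ⟨t₀ - P.G c, by linarith, ?_⟩
        intro t ht0 htlb htt₀
        have ht1 : t < 1 := lt_of_le_of_lt htt₀ ht₀1
        set xt := P.inv t with hxt
        have hxt0 : 0 ≤ xt := P.inv_nonneg ht0 ht1
        have hGxt : P.G xt = t := P.G_inv ht0 ht1
        rcases le_or_gt x₀ xt with hle | hlt
        · rw [P.psi_eq ht0 ht1, P.psi_eq ht₀0 ht₀1, P.I_split hx₀0 hle]
          simp only [← hx₀def, ← hxt, mul_add]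
          have h1 := P.I_nonneg (Set.Ioc x₀ xt)
          have h2 := mul_le_mul_of_nonneg_left h1 hθ.le
          rw [mul_zero] at h2
          linarith
        · have hcxt : c < xt := by
            by_contra hcon
            push_neg at hcon
            have := P.mono hcon
            rw [hGxt] at this
            linarith
          rw [P.psi_eq ht0 ht1, P.psi_eq ht₀0 ht₀1, P.I_split hxt0 hlt.le]
          simp only [← hx₀def, ← hxt, mul_add]
          have hIle : ∫ u in Set.Ioc xt x₀, (1 - P.G u) ≤ (x₀ - xt) * 1 :=
            P.I_le hxt0 hlt.le fun u hu => by linarith [P.nonneg u]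
          rw [mul_one] at hIle
          have hd : x₀ - xt < ε / (2 * P.θ) := by
            have : x₀ - ε / (2 * P.θ) ≤ c := le_max_left _ _
            linarith
          have h1 := mul_le_mul_of_nonneg_left hIle hθ.le
          have h2 := (mul_lt_mul_iff_right₀ hθ).2 hd
          have h3 : P.θ * (ε / (2 * P.θ)) = ε / 2 := by field_simp
          linarith
    refine ⟨min (min δr δl) ((1 - t₀)/2), lt_min (lt_min hδr hδl) (by linarith), ?_⟩
    intro t ht hdist
    rw [Real.dist_eq, abs_lt] at hdist
    rcases le_or_gt t₀ t with hge | hlt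
    · have ht1 : t < 1 := by
        have h1 := hdist.2
        have h2 : min (min δr δl) ((1 - t₀)/2) ≤ (1 - t₀)/2 := min_le_right _ _
        linarith
      have hub : t < t₀ + δr := by
        have : min (min δr δl) ((1 - t₀)/2) ≤ δr := le_trans (min_le_left _ _) (min_le_left _ _)
        linarith [hdist.2]
      have hmono := P.psi_mono ht₀0 hge (le_of_lt ht1)
      rw [Real.dist_eq, abs_of_nonneg (by linarith)]
      exact Hr t hge hub ht1
    · have hlb : t₀ - δl < t := by
        have : min (min δr δl) ((1 - t₀)/2) ≤ δl := le_trans (min_le_left _ _) (min_le_right _ _)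
        linarith [hdist.1]
      have hmono := P.psi_mono ht.1 hlt.le ht₀.2
      rw [Real.dist_eq, abs_of_nonpos (by linarith), neg_sub]
      exact Hl t ht.1 hlb hlt.le

end PatienceDist

end AuxLemmas

/-- Invariant queue length as a function of the total matching rate `s`:
`λ/θ` if `s = 0`, and `(λ/θ) G_e (G⁻¹ (1 - s/λ))` otherwise. -/
noncomputable def qstarFun (lam : ℝ) (P : PatienceDist) (s : ℝ) : ℝ :=
  if s = 0 then lam / P.θ else (lam / P.θ) * P.Ge (P.inv (1 - s / lam))

/-- The feasible set of matching rates `𝕄(λ,μ)`. -/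
def Mset {J K : Type*} [Fintype J] [Fintype K] (lam : J → ℝ) (mu : K → ℝ) :
    Set (J × K → ℝ) :=
  {m | (∀ p, 0 ≤ m p) ∧ (∀ j, ∑ k : K, m (j, k) ≤ lam j) ∧
    (∀ k, ∑ j : J, m (j, k) ≤ mu k)}

/-- The matching-problem objective
`Φ(m) = Σ v_{jk} m_{jk} − Σ_j c_j^D q*_j(m) − Σ_k c_k^S i*_k(m)`. -/
noncomputable def Phi {J K : Type*} [Fintype J] [Fintype K]
    (v : J × K → ℝ) (cD : J → ℝ) (cS : K → ℝ) (lam : J → ℝ) (mu : K → ℝ)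
    (GD : J → PatienceDist) (GS : K → PatienceDist) (m : J × K → ℝ) : ℝ :=
  (∑ p : J × K, v p * m p)
    - (∑ j : J, cD j * qstarFun (lam j) (GD j) (∑ k : K, m (j, k)))
    - (∑ k : K, cS k * qstarFun (mu k) (GS k) (∑ j : J, m (j, k)))


section QstarAux
open Set

section QstarLemmas

variable (P : PatienceDist)

lemma qstar_eq_psi {lam : ℝ} (hlam : 0 < lam) (s : ℝ) :
    qstarFun lam P s = (lam / P.θ) * P.psi (1 - s / lam) := by
  by_cases hs : s = 0
  · subst hs
    simp [qstarFun, PatienceDist.psi_one]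
  · rw [qstarFun, if_neg hs, PatienceDist.psi, if_neg]
    intro h
    exact hs (by field_simp at h; linarith)

lemma qstar_mapsTo {lam : ℝ} (hlam : 0 < lam) {s : ℝ} (hs : s ∈ Set.Icc 0 lam) :
    1 - s / lam ∈ Set.Icc (0:ℝ) 1 := by
  constructor
  · have : s / lam ≤ 1 := (div_le_one hlam).2 hs.2
    linarith
  · have : 0 ≤ s / lam := div_nonneg hs.1 hlam.le
    linarith

lemma qstar_concaveOn (hP : P.HazardNondec) {lam : ℝ} (hlam : 0 < lam) :
    ConcaveOn ℝ (Set.Icc 0 lam) (qstarFun lam P) := by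
  have hψ := P.psi_concave hP
  refine ⟨convex_Icc _ _, ?_⟩
  intro x hx y hy a b ha hb hab
  simp only [smul_eq_mul]
  rw [qstar_eq_psi P hlam, qstar_eq_psi P hlam, qstar_eq_psi P hlam]
  have harg : 1 - (a * x + b * y) / lam = a * (1 - x / lam) + b * (1 - y / lam) := by
    linear_combination (-1 : ℝ) * hab

  rw [harg]
  have hkey := hψ.2 (qstar_mapsTo hlam hx) (qstar_mapsTo hlam hy) ha hb hab
  simp only [smul_eq_mul] at hkey
  have hcoef : 0 ≤ lam / P.θ := div_nonneg hlam.le P.theta_pos.le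
  have := mul_le_mul_of_nonneg_left hkey hcoef
  nlinarith [this]

lemma qstar_continuousOn {lam : ℝ} (hlam : 0 < lam) :
    ContinuousOn (qstarFun lam P) (Set.Icc 0 lam) := by
  have h1 : ContinuousOn (fun s : ℝ => (lam / P.θ) * P.psi (1 - s / lam))
      (Set.Icc 0 lam) := by
    apply ContinuousOn.mul continuousOn_const
    exact P.psi_continuousOn.comp
      ((continuousOn_const.sub (continuousOn_id.div_const lam)))
      (fun s hs => qstar_mapsTo hlam hs)
  exact ContinuousOn.congr h1 (fun s _ => qstar_eq_psi P hlam s)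

end QstarLemmas

end QstarAux

/-- Theorem (existence of an optimal extreme point solution): if all patience time
distributions have nondecreasing hazard rates, the matching problem `max Φ` over
`𝕄(λ,μ)` has an optimal solution that is an extreme point of `𝕄(λ,μ)`. -/
theorem exists_optimal_extreme_point
    {J K : Type*} [Fintype J] [Fintype K] [Nonempty J] [Nonempty K]
    (lam : J → ℝ) (mu : K → ℝ) (hlam : ∀ j, 0 < lam j) (hmu : ∀ k, 0 < mu k)
    (GD : J → PatienceDist) (GS : K → PatienceDist)
    (v : J × K → ℝ) (cD : J → ℝ) (cS : K → ℝ)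
    (hv : ∀ p, 0 ≤ v p) (hcD : ∀ j, 0 ≤ cD j) (hcS : ∀ k, 0 ≤ cS k)
    (hD : ∀ j, (GD j).HazardNondec) (hS : ∀ k, (GS k).HazardNondec) :
    ∃ mstar ∈ Set.extremePoints ℝ (Mset lam mu),
      ∀ m ∈ Mset lam mu,
        Phi v cD cS lam mu GD GS m ≤ Phi v cD cS lam mu GD GS mstar := by
  classical
  set Φ := Phi v cD cS lam mu GD GS with hΦdef
  -- membership of 0
  have hM0 : (0 : J × K → ℝ) ∈ Mset lam mu := by
    refine ⟨fun p => le_rfl, fun j => ?_, fun k => ?_⟩ <;> simp [(hlam _).le, (hmu _).le]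
  -- convexity of Mset
  have hMconv : Convex ℝ (Mset lam mu) := by
    intro x hx y hy a b ha hb hab
    refine ⟨fun p => ?_, fun j => ?_, fun k => ?_⟩
    · simp only [Pi.add_apply, Pi.smul_apply, smul_eq_mul]
      exact add_nonneg (mul_nonneg ha (hx.1 p)) (mul_nonneg hb (hy.1 p))
    · simp only [Pi.add_apply, Pi.smul_apply, smul_eq_mul]
      rw [Finset.sum_add_distrib, ← Finset.mul_sum, ← Finset.mul_sum]
      have h1 := mul_le_mul_of_nonneg_left (hx.2.1 j) ha
      have h2 := mul_le_mul_of_nonneg_left (hy.2.1 j) hb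
      have h3 : a * lam j + b * lam j = lam j := by rw [← add_mul, hab, one_mul]
      linarith
    · simp only [Pi.add_apply, Pi.smul_apply, smul_eq_mul]
      rw [Finset.sum_add_distrib, ← Finset.mul_sum, ← Finset.mul_sum]
      have h1 := mul_le_mul_of_nonneg_left (hx.2.2 k) ha
      have h2 := mul_le_mul_of_nonneg_left (hy.2.2 k) hb
      have h3 : a * mu k + b * mu k = mu k := by rw [← add_mul, hab, one_mul]
      linarith
  -- closedness of Mset
  have hMclosed : IsClosed (Mset lam mu) := by
    have heq : Mset lam mu = (⋂ p : J × K, {m : J × K → ℝ | 0 ≤ m p}) ∩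
        ((⋂ j : J, {m : J × K → ℝ | ∑ k : K, m (j, k) ≤ lam j}) ∩
         (⋂ k : K, {m : J × K → ℝ | ∑ j : J, m (j, k) ≤ mu k})) := by
      ext m
      simp [Mset, Set.mem_iInter]
    rw [heq]
    refine IsClosed.inter ?_ (IsClosed.inter ?_ ?_)
    · exact isClosed_iInter fun p => isClosed_le continuous_const (continuous_apply p)
    · exact isClosed_iInter fun j => isClosed_le
        (continuous_finset_sum _ fun k _ => continuous_apply (j, k)) continuous_const
    · exact isClosed_iInter fun k => isClosed_le
        (continuous_finset_sum _ fun j _ => continuous_apply (j, k)) continuous_const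
  -- compactness of Mset
  have hrowmem : ∀ (j : J) (m : J × K → ℝ), m ∈ Mset lam mu →
      (∑ k : K, m (j, k)) ∈ Set.Icc (0:ℝ) (lam j) := fun j m hm =>
    ⟨Finset.sum_nonneg fun k _ => hm.1 _, hm.2.1 j⟩
  have hcolmem : ∀ (k : K) (m : J × K → ℝ), m ∈ Mset lam mu →
      (∑ j : J, m (j, k)) ∈ Set.Icc (0:ℝ) (mu k) := fun k m hm =>
    ⟨Finset.sum_nonneg fun j _ => hm.1 _, hm.2.2 k⟩
  have hMcomp : IsCompact (Mset lam mu) := by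
    refine IsCompact.of_isClosed_subset
      (isCompact_univ_pi (s := fun p : J × K => Set.Icc (0:ℝ) (lam p.1))
        fun p => isCompact_Icc) hMclosed ?_
    intro m hm
    rw [Set.mem_univ_pi]
    intro p
    refine ⟨hm.1 p, ?_⟩
    have h1 : m (p.1, p.2) ≤ ∑ k : K, m (p.1, k) :=
      Finset.single_le_sum (f := fun k => m (p.1, k)) (fun i _ => hm.1 _)
        (Finset.mem_univ p.2)
    have h2 := hm.2.1 p.1
    calc m p = m (p.1, p.2) := by rw [Prod.mk.eta]
      _ ≤ ∑ k : K, m (p.1, k) := h1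
      _ ≤ lam p.1 := h2
  -- continuity of Phi on Mset
  have hPhiCont : ContinuousOn Φ (Mset lam mu) := by
    rw [hΦdef]
    unfold Phi
    refine ContinuousOn.sub (ContinuousOn.sub ?_ ?_) ?_
    · exact (continuous_finset_sum _ fun p _ =>
        continuous_const.mul (continuous_apply p)).continuousOn
    · refine continuousOn_finset_sum _ fun j _ => ContinuousOn.mul continuousOn_const ?_
      exact (qstar_continuousOn (GD j) (hlam j)).comp
        (continuous_finset_sum _ fun k _ => continuous_apply (j, k)).continuousOn
        (fun m hm => hrowmem j m hm)
    · refine continuousOn_finset_sum _ fun k _ => ContinuousOn.mul continuousOn_const ?_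
      exact (qstar_continuousOn (GS k) (hmu k)).comp
        (continuous_finset_sum _ fun j _ => continuous_apply (j, k)).continuousOn
        (fun m hm => hcolmem k m hm)
  -- convexity of Phi on Mset
  have hPhiConv : ConvexOn ℝ (Mset lam mu) Φ := by
    refine ⟨hMconv, ?_⟩
    intro x hx y hy a b ha hb hab
    simp only [smul_eq_mul]
    have hA : ∑ p : J × K, v p * ((a • x + b • y) p)
        = a * (∑ p : J × K, v p * x p) + b * (∑ p : J × K, v p * y p) := by
      rw [Finset.mul_sum, Finset.mul_sum, ← Finset.sum_add_distrib]
      exact Finset.sum_congr rfl fun p _ => by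
        simp only [Pi.add_apply, Pi.smul_apply, smul_eq_mul]; ring
    have hBsum : a * (∑ j : J, cD j * qstarFun (lam j) (GD j) (∑ k : K, x (j, k)))
        + b * (∑ j : J, cD j * qstarFun (lam j) (GD j) (∑ k : K, y (j, k)))
        ≤ ∑ j : J, cD j * qstarFun (lam j) (GD j) (∑ k : K, (a • x + b • y) (j, k)) := by
      rw [Finset.mul_sum, Finset.mul_sum, ← Finset.sum_add_distrib]
      refine Finset.sum_le_sum fun j _ => ?_
      have hsum : ∑ k : K, (a • x + b • y) (j, k)
          = a * (∑ k : K, x (j, k)) + b * (∑ k : K, y (j, k)) := by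
        rw [Finset.mul_sum, Finset.mul_sum, ← Finset.sum_add_distrib]
        exact Finset.sum_congr rfl fun k _ => by
          simp only [Pi.add_apply, Pi.smul_apply, smul_eq_mul]
      have hc := ((qstar_concaveOn (GD j) (hD j) (hlam j)).2
        (hrowmem j x hx) (hrowmem j y hy) ha hb hab)
      simp only [smul_eq_mul] at hc
      rw [hsum]
      have := mul_le_mul_of_nonneg_left hc (hcD j)
      nlinarith [this]
    have hCsum : a * (∑ k : K, cS k * qstarFun (mu k) (GS k) (∑ j : J, x (j, k)))
        + b * (∑ k : K, cS k * qstarFun (mu k) (GS k) (∑ j : J, y (j, k)))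
        ≤ ∑ k : K, cS k * qstarFun (mu k) (GS k) (∑ j : J, (a • x + b • y) (j, k)) := by
      rw [Finset.mul_sum, Finset.mul_sum, ← Finset.sum_add_distrib]
      refine Finset.sum_le_sum fun k _ => ?_
      have hsum : ∑ j : J, (a • x + b • y) (j, k)
          = a * (∑ j : J, x (j, k)) + b * (∑ j : J, y (j, k)) := by
        rw [Finset.mul_sum, Finset.mul_sum, ← Finset.sum_add_distrib]
        exact Finset.sum_congr rfl fun j _ => by
          simp only [Pi.add_apply, Pi.smul_apply, smul_eq_mul]
      have hc := ((qstar_concaveOn (GS k) (hS k) (hmu k)).2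
        (hcolmem k x hx) (hcolmem k y hy) ha hb hab)
      simp only [smul_eq_mul] at hc
      rw [hsum]
      have := mul_le_mul_of_nonneg_left hc (hcS k)
      nlinarith [this]
    have hexpx : a * Φ x = a * (∑ p : J × K, v p * x p)
        - a * (∑ j : J, cD j * qstarFun (lam j) (GD j) (∑ k : K, x (j, k)))
        - a * (∑ k : K, cS k * qstarFun (mu k) (GS k) (∑ j : J, x (j, k))) := by
      rw [hΦdef]; unfold Phi; ring
    have hexpy : b * Φ y = b * (∑ p : J × K, v p * y p)
        - b * (∑ j : J, cD j * qstarFun (lam j) (GD j) (∑ k : K, y (j, k)))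
        - b * (∑ k : K, cS k * qstarFun (mu k) (GS k) (∑ j : J, y (j, k))) := by
      rw [hΦdef]; unfold Phi; ring
    rw [hexpx, hexpy, hΦdef]
    unfold Phi
    rw [hA]
    linarith
  -- maximizer
  obtain ⟨m₀, hm₀M, hm₀max⟩ := hMcomp.exists_isMaxOn ⟨0, hM0⟩ hPhiCont
  -- the face of maximizers
  set S : Set (J × K → ℝ) := Mset lam mu ∩ Φ ⁻¹' Set.Ici (Φ m₀) with hSdef
  have hSclosed : IsClosed S :=
    hPhiCont.preimage_isClosed_of_isClosed hMclosed isClosed_Ici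
  have hScomp : IsCompact S :=
    IsCompact.of_isClosed_subset hMcomp hSclosed Set.inter_subset_left
  have hSne : S.Nonempty := ⟨m₀, hm₀M, Set.mem_preimage.mpr Set.self_mem_Ici⟩
  have hSext : IsExtreme ℝ (Mset lam mu) S := by
    constructor
    · exact Set.inter_subset_left
    · rintro x1 hx1 x2 hx2 x ⟨hxM, hxmax⟩ ⟨a, b, ha, hb, hab, rfl⟩
      have h1 : Φ x1 ≤ Φ m₀ := hm₀max hx1
      have h2 : Φ x2 ≤ Φ m₀ := hm₀max hx2
      have h3 : Φ m₀ ≤ Φ (a • x1 + b • x2) := hxmax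
      have h4 := hPhiConv.2 hx1 hx2 ha.le hb.le hab
      simp only [smul_eq_mul] at h4
      have hb2 : b * Φ x2 ≤ b * Φ m₀ := mul_le_mul_of_nonneg_left h2 hb.le
      have ha1 : a * Φ x1 ≤ a * Φ m₀ := mul_le_mul_of_nonneg_left h1 ha.le
      have hid : a * Φ m₀ + b * Φ m₀ = Φ m₀ := by rw [← add_mul, hab, one_mul]
      have hg1 : Φ m₀ ≤ Φ x1 := by
        have key : a * Φ m₀ ≤ a * Φ x1 := by linarith
        exact le_of_mul_le_mul_left key ha
      have hg2 : Φ m₀ ≤ Φ x2 := by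
        have key : b * Φ m₀ ≤ b * Φ x2 := by linarith
        exact le_of_mul_le_mul_left key hb
      exact ⟨hx1, hg1⟩
  obtain ⟨e, he⟩ := hScomp.extremePoints_nonempty hSne
  refine ⟨e, hSext.extremePoints_subset_extremePoints he, ?_⟩
  intro m hmM
  have heS : e ∈ S := he.1
  exact le_trans (hm₀max hmM) heS.2
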